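/- In the setting of the dyadic quantile grid a_j := F₀⁻¹(u_j) with u_j := 2^{j−1} for j ≤ 0 and u_j := 1 − 2^{−(j+1)} for j ≥ 1, for a continuous log-concave density f₀, the consecutive gaps satisfy (a_j − a_{j−1})/8 ≤ a_{j+1} − a_j ≤ 8(a_j − a_{j−1}) for all j ∈ ℤ. -/

import Mathlib

/-!
Write `F` for the distribution function of `f₀`. Log-concavity makes the reversed hazard rate
`f₀ / F` nonincreasing (equivalently, `J₀(u)/u` is nonincreasing), so for
`v ∈ (a_{j-1}, a_j]` and `w ∈ (a_j, a_{j+1}]` we get `u_{j-1} f₀(w) ≤ u_{j+1} f₀(v)`.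
Integrating in `v` and `w` compares the two gap lengths with the masses `u_j - u_{j-1}` and
`u_{j+1} - u_j` they carry, and on the dyadic grid the resulting ratio is at most `8`.
The other inequality is the same argument for `x ↦ f₀(-x)`, since `u_{-j} = 1 - u_j`.
-/

open MeasureTheory Real

/-- The dyadic grid of quantile levels: `u_j = 2^{j−1}` for `j ≤ 0` and
`u_j = 1 − 2^{−(j+1)}` for `j ≥ 1`. -/
noncomputable def uGrid (j : ℤ) : ℝ := if j ≤ 0 then (2:ℝ) ^ (j - 1) else 1 - (2:ℝ) ^ (-(j + 1))

theorem uGrid_neg (j : ℤ) : uGrid (-j) = 1 - uGrid j := by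
  rcases lt_trichotomy j 0 with hj | rfl | hj
  · simp [uGrid, hj.not_ge, hj.le, sub_eq_add_neg, add_comm]
  · norm_num [uGrid]
  · simp [uGrid, hj.not_ge, hj.le, sub_eq_add_neg, add_comm]

theorem uGrid_pos (j : ℤ) : 0 < uGrid j := by
  unfold uGrid
  split_ifs with hj
  · positivity
  · exact sub_pos.2 (zpow_lt_one_of_neg₀ one_lt_two (by omega))

theorem uGrid_lt_one (j : ℤ) : uGrid j < 1 := by
  linarith [uGrid_neg j, uGrid_pos (-j)]

theorem uGrid_strictMono : StrictMono uGrid := by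
  refine strictMono_int_of_lt_succ fun j => ?_
  rcases lt_trichotomy j 0 with hj | rfl | hj
  · simp only [uGrid, if_pos hj.le, if_pos (show j + 1 ≤ 0 by omega)]
    exact zpow_lt_zpow_right₀ one_lt_two (by omega)
  · norm_num [uGrid]
  · simp only [uGrid, if_neg hj.not_ge, if_neg (show ¬ j + 1 ≤ 0 by omega)]
    exact sub_lt_sub_left (zpow_lt_zpow_right₀ one_lt_two (by omega)) 1

theorem uGrid_ratio_le (j : ℤ) :
    uGrid (j + 1) * (uGrid j - uGrid (j - 1)) ≤
      8 * (uGrid (j - 1) * (uGrid (j + 1) - uGrid j)) := by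
  have two_zpow_succ : ∀ k : ℤ, (2:ℝ) ^ (k + 1) = 2 * 2 ^ k := fun k => by
    rw [zpow_add_one₀ two_ne_zero, mul_comm]
  rcases lt_or_ge j 0 with hj | hj
  · simp only [uGrid, if_pos (show j - 1 ≤ 0 by omega), if_pos hj.le,
      if_pos (show j + 1 ≤ 0 by omega)]
    rw [show j - 1 - 1 = j - 2 by ring, show j - 1 = j - 2 + 1 by ring,
      show j + 1 - 1 = j - 2 + 1 + 1 by ring]
    simp only [two_zpow_succ]
    nlinarith [zpow_pos (two_pos : (0:ℝ) < 2) (j - 2)]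
  obtain rfl | rfl | hj : j = 0 ∨ j = 1 ∨ 2 ≤ j := by omega
  · norm_num [uGrid]
  · norm_num [uGrid]
  simp only [uGrid, if_neg (show ¬ j - 1 ≤ 0 by omega), if_neg (show ¬ j ≤ 0 by omega),
    if_neg (show ¬ j + 1 ≤ 0 by omega)]
  rw [show -(j - 1 + 1) = -(j + 2) + 1 + 1 by ring, show -(j + 1) = -(j + 2) + 1 by ring,
    show -(j + 1 + 1) = -(j + 2) by ring]
  simp only [two_zpow_succ]
  have hsmall : (2:ℝ) ^ (-(j + 2)) ≤ 1 / 16 :=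
    (zpow_le_zpow_right₀ one_le_two (show -(j + 2) ≤ -4 by omega)).trans_eq (by norm_num)
  nlinarith [zpow_pos (two_pos : (0:ℝ) < 2) (-(j + 2))]

theorem uGrid_tail_ratio_le (j : ℤ) :
    (1 - uGrid (j - 1)) * (uGrid (j + 1) - uGrid j) ≤
      8 * ((1 - uGrid (j + 1)) * (uGrid j - uGrid (j - 1))) := by
  have h := uGrid_ratio_le (-j)
  rw [show -j + 1 = -(j - 1) by ring, show -j - 1 = -(j + 1) by ring, uGrid_neg, uGrid_neg,
    uGrid_neg] at h
  linear_combination h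

theorem le_mul_of_mul_le_mul_of_le_mul {a b c x y : ℝ} (hx : 0 < x) (hb : 0 ≤ b)
    (h : a * x ≤ b * y) (hy : y ≤ c * x) : a ≤ c * b :=
  le_of_mul_le_mul_right (h.trans (by nlinarith)) hx

theorem mul_setIntegral_mul_le_of_forall_mul_le {X : Type*} [MeasurableSpace X] {μ : Measure X}
    {f : X → ℝ} {s t : Set X} (hs : MeasurableSet s) (ht : MeasurableSet t) (hμs : μ s ≠ ⊤)
    (hμt : μ t ≠ ⊤) (hfs : IntegrableOn f s μ) (hft : IntegrableOn f t μ) {α β : ℝ}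
    (h : ∀ v ∈ s, ∀ w ∈ t, α * f w ≤ β * f v) :
    α * (∫ w in t, f w ∂μ) * μ.real s ≤ β * (∫ v in s, f v ∂μ) * μ.real t := by
  have inner : ∀ v ∈ s, α * ∫ w in t, f w ∂μ ≤ β * f v * μ.real t := fun v hv =>
    calc α * ∫ w in t, f w ∂μ = ∫ w in t, α * f w ∂μ := (integral_const_mul _ _).symm
      _ ≤ ∫ _ in t, β * f v ∂μ :=
          setIntegral_mono_on (hft.const_mul α) (integrableOn_const hμt) ht (h v hv)
      _ = β * f v * μ.real t := by rw [setIntegral_const, smul_eq_mul, mul_comm]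
  calc α * (∫ w in t, f w ∂μ) * μ.real s = ∫ _ in s, α * ∫ w in t, f w ∂μ ∂μ := by
        rw [setIntegral_const, smul_eq_mul, mul_comm]
    _ ≤ ∫ v in s, β * f v * μ.real t ∂μ :=
        setIntegral_mono_on (integrableOn_const hμs) ((hfs.const_mul β).mul_const _) hs inner
    _ = β * (∫ v in s, f v ∂μ) * μ.real t := by rw [integral_mul_const, integral_const_mul]

theorem monotone_integral_Iic {f : ℝ → ℝ} (h0 : ∀ x, 0 ≤ f x) (hint : Integrable f) :
    Monotone fun x => ∫ t in Set.Iic x, f t := fun _ _ hxy =>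
  setIntegral_mono_set hint.integrableOn (ae_of_all _ h0) (Set.Iic_subset_Iic.2 hxy).eventuallyLE

def IsLogConcave (f : ℝ → ℝ) : Prop :=
  ∀ x y : ℝ, ∀ t ∈ Set.Icc (0:ℝ) 1, f x ^ t * f y ^ (1 - t) ≤ f (t * x + (1 - t) * y)

namespace IsLogConcave

variable {f : ℝ → ℝ}

theorem comp_neg (hf : IsLogConcave f) : IsLogConcave fun x => f (-x) := by
  intro x y t ht
  convert hf (-x) (-y) t ht using 2
  ring

theorem mul_le_mul_of_add_eq (h0 : ∀ x, 0 ≤ f x) (hf : IsLogConcave f) {a b c d : ℝ}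
    (hac : a ≤ c) (hcb : c ≤ b) (hsum : c + d = a + b) : f a * f b ≤ f c * f d := by
  obtain ⟨t, ht, htba⟩ : ∃ t ∈ Set.Icc (0:ℝ) 1, t * (b - a) = b - c :=
    ⟨(b - c) / (b - a), ⟨div_nonneg (by linarith) (by linarith),
      div_le_one_of_le₀ (by linarith) (by linarith)⟩, div_mul_cancel_of_imp fun h => by linarith⟩
  have hc : f a ^ t * f b ^ (1 - t) ≤ f c := by
    convert hf a b t ht using 2; linear_combination htba
  have hd : f b ^ t * f a ^ (1 - t) ≤ f d := by
    convert hf b a t ht using 2; linear_combination hsum - htba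
  have hsplit : ∀ x, f x ^ t * f x ^ (1 - t) = f x := fun x => by
    rw [← rpow_add' (h0 x) (by norm_num), add_sub_cancel, rpow_one]
  calc f a * f b = (f a ^ t * f a ^ (1 - t)) * (f b ^ t * f b ^ (1 - t)) := by
        rw [hsplit, hsplit]
    _ = (f a ^ t * f b ^ (1 - t)) * (f b ^ t * f a ^ (1 - t)) := by ring
    _ ≤ f c * f d :=
        mul_le_mul hc hd (mul_nonneg (rpow_nonneg (h0 b) _) (rpow_nonneg (h0 a) _)) (h0 c)

theorem mul_integral_Iic_le (h0 : ∀ x, 0 ≤ f x) (hf : IsLogConcave f) (hint : Integrable f)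
    {x y : ℝ} (hxy : x ≤ y) :
    f y * ∫ t in Set.Iic x, f t ≤ f x * ∫ t in Set.Iic y, f t := by
  have hshift : ∫ t in Set.Iic x, f t = ∫ t in Set.Iic y, f (t - (y - x)) := by
    simpa using ((measurePreserving_sub_right volume (y - x)).setIntegral_preimage_emb
      (measurableEmbedding_subRight (y - x)) f (Set.Iic x)).symm
  calc f y * ∫ t in Set.Iic x, f t = ∫ t in Set.Iic y, f y * f (t - (y - x)) := by
        rw [hshift, integral_const_mul]
    _ ≤ ∫ t in Set.Iic y, f x * f t := by
        refine setIntegral_mono_on ((hint.comp_sub_right _).const_mul _).integrableOn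
          (hint.const_mul _).integrableOn measurableSet_Iic fun t (ht : t ≤ y) => ?_
        rw [mul_comm]
        exact hf.mul_le_mul_of_add_eq h0 (by linarith) hxy (by ring)
    _ = f x * ∫ t in Set.Iic y, f t := integral_const_mul _ _

theorem sub_mul_le_of_integral_Iic (h0 : ∀ x, 0 ≤ f x) (hf : IsLogConcave f)
    (hint : Integrable f) {A B C p q r : ℝ} (hAB : A ≤ B) (hBC : B ≤ C)
    (hp : ∫ t in Set.Iic A, f t = p) (hq : ∫ t in Set.Iic B, f t = q)
    (hr : ∫ t in Set.Iic C, f t = r) :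
    (B - A) * (p * (r - q)) ≤ (C - B) * (r * (q - p)) := by
  have hmono := monotone_integral_Iic h0 hint
  have hmass : ∀ {x y : ℝ}, x ≤ y →
      ∫ t in Set.Ioc x y, f t = (∫ t in Set.Iic y, f t) - ∫ t in Set.Iic x, f t := fun hxy => by
    rw [← intervalIntegral.integral_of_le hxy,
      intervalIntegral.integral_Iic_sub_Iic hint.integrableOn hint.integrableOn]
  have key : ∀ v ∈ Set.Ioc A B, ∀ w ∈ Set.Ioc B C, p * f w ≤ r * f v := fun v hv w hw =>
    calc p * f w ≤ (∫ t in Set.Iic v, f t) * f w :=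
          mul_le_mul_of_nonneg_right (hp ▸ hmono hv.1.le) (h0 w)
      _ ≤ f v * ∫ t in Set.Iic w, f t := by
          rw [mul_comm]; exact hf.mul_integral_Iic_le h0 hint (hv.2.trans hw.1.le)
      _ ≤ r * f v := by rw [mul_comm r]; exact mul_le_mul_of_nonneg_left (hr ▸ hmono hw.2) (h0 v)
  have h := mul_setIntegral_mul_le_of_forall_mul_le measurableSet_Ioc measurableSet_Ioc
    measure_Ioc_lt_top.ne measure_Ioc_lt_top.ne hint.integrableOn hint.integrableOn key
  rw [hmass hAB, hmass hBC, hp, hq, hr, Real.volume_real_Ioc_of_le hAB,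
    Real.volume_real_Ioc_of_le hBC] at h
  linear_combination h

theorem sub_mul_le_of_integral_Ioi (h0 : ∀ x, 0 ≤ f x) (hf : IsLogConcave f)
    (hint : Integrable f) {A B C p q r : ℝ} (hAB : A ≤ B) (hBC : B ≤ C)
    (hp : ∫ t in Set.Ioi A, f t = p) (hq : ∫ t in Set.Ioi B, f t = q)
    (hr : ∫ t in Set.Ioi C, f t = r) :
    (C - B) * (r * (p - q)) ≤ (B - A) * (p * (q - r)) := by
  have hreflect : ∀ x, ∫ t in Set.Iic (-x), f (-t) = ∫ t in Set.Ioi x, f t := fun x => by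
    rw [integral_comp_neg_Iic, neg_neg]
  have h := hf.comp_neg.sub_mul_le_of_integral_Iic (fun x => h0 (-x)) hint.comp_neg
    (neg_le_neg hBC) (neg_le_neg hAB) ((hreflect C).trans hr) ((hreflect B).trans hq)
    ((hreflect A).trans hp)
  linear_combination h

end IsLogConcave

theorem dyadic_quantile_gap_comparison_general
    (f₀ : ℝ → ℝ)
    (hf_nonneg : ∀ x, 0 ≤ f₀ x) (hf_int : Integrable f₀ volume) (hf_mass : ∫ x, f₀ x = 1)
    (hlogconc : ∀ x y : ℝ, ∀ t ∈ Set.Icc (0:ℝ) 1,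
      f₀ x ^ t * f₀ y ^ (1 - t) ≤ f₀ (t * x + (1 - t) * y))
    (Finv : ℝ → ℝ) (hFinv : ∀ u ∈ Set.Ioo (0:ℝ) 1, (∫ t in Set.Iic (Finv u), f₀ t) = u)
    : ∀ j : ℤ,
      (Finv (uGrid j) - Finv (uGrid (j - 1))) / 8 ≤ Finv (uGrid (j + 1)) - Finv (uGrid j) ∧
      Finv (uGrid (j + 1)) - Finv (uGrid j) ≤ 8 * (Finv (uGrid j) - Finv (uGrid (j - 1))) := by
  intro j
  have hF (k : ℤ) : ∫ t in Set.Iic (Finv (uGrid k)), f₀ t = uGrid k :=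
    hFinv _ ⟨uGrid_pos k, uGrid_lt_one k⟩
  have hS (k : ℤ) : ∫ t in Set.Ioi (Finv (uGrid k)), f₀ t = 1 - uGrid k := by
    rw [← hf_mass, ← intervalIntegral.integral_Iic_add_Ioi hf_int.integrableOn
      hf_int.integrableOn, hF, add_sub_cancel_left]
  have hmono {k l : ℤ} (hkl : k < l) : Finv (uGrid k) ≤ Finv (uGrid l) :=
    ((monotone_integral_Iic hf_nonneg hf_int).reflect_lt
      (by simpa only [hF] using uGrid_strictMono hkl)).le
  have hAB := hmono (sub_one_lt j)
  have hBC := hmono (lt_add_one j)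
  have hleft := IsLogConcave.sub_mul_le_of_integral_Iic hf_nonneg hlogconc hf_int hAB hBC
    (hF (j - 1)) (hF j) (hF (j + 1))
  have hright := IsLogConcave.sub_mul_le_of_integral_Ioi hf_nonneg hlogconc hf_int hAB hBC
    (hS (j - 1)) (hS j) (hS (j + 1))
  have hpq := uGrid_strictMono (sub_one_lt j)
  have hqr := uGrid_strictMono (lt_add_one j)
  constructor
  · have := le_mul_of_mul_le_mul_of_le_mul (mul_pos (uGrid_pos _) (sub_pos.2 hqr))
      (sub_nonneg.2 hBC) hleft (uGrid_ratio_le j)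
    linarith
  · exact le_mul_of_mul_le_mul_of_le_mul
      (mul_pos (sub_pos.2 (uGrid_lt_one _)) (sub_pos.2 hpq)) (sub_nonneg.2 hAB)
      (by linear_combination hright) (uGrid_tail_ratio_le j)

/-- Consecutive gaps of the dyadic quantile grid `a_j = F₀⁻¹(u_j)` of a continuous
log-concave density are comparable: `(a_j − a_{j−1})/8 ≤ a_{j+1} − a_j ≤ 8(a_j − a_{j−1})`. -/
theorem dyadic_quantile_gap_comparison
    (f₀ : ℝ → ℝ) (hcont : Continuous f₀)
    (hf_nonneg : ∀ x, 0 ≤ f₀ x) (hf_int : Integrable f₀ volume) (hf_mass : ∫ x, f₀ x = 1)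
    (hlogconc : ∀ x y : ℝ, ∀ t ∈ Set.Icc (0:ℝ) 1,
      f₀ x ^ t * f₀ y ^ (1 - t) ≤ f₀ (t * x + (1 - t) * y))
    (Finv : ℝ → ℝ) (hFinv : ∀ u ∈ Set.Ioo (0:ℝ) 1, (∫ t in Set.Iic (Finv u), f₀ t) = u)
    (ψ₀ : ℝ → ℝ)
    (hψ : ∀ x : ℝ, 0 < f₀ x →
      HasDerivWithinAt (fun t => Real.log (f₀ t)) (ψ₀ x) (Set.Ici x) x)
    : ∀ j : ℤ,
      (Finv (uGrid j) - Finv (uGrid (j - 1))) / 8 ≤ Finv (uGrid (j + 1)) - Finv (uGrid j) ∧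
      Finv (uGrid (j + 1)) - Finv (uGrid j) ≤ 8 * (Finv (uGrid j) - Finv (uGrid (j - 1))) :=
  dyadic_quantile_gap_comparison_general f₀ hf_nonneg hf_int hf_mass hlogconc Finv hFinv
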